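/- arXiv:0906.1672 — 3 statements merged into one kernel-verified Lean document; each statement's English description precedes it below -/
import Mathlib

section
/- The number of k-Stirling permutations of size n equals the product ∏_{i=1}^{n-1}(k·i+1). -/
/-- A `k`-Stirling permutation of size `n`, encoded as a word (list) over `{1,…,n}`:
length `k*n`, each letter `1,…,n` occurs exactly `k` times, and any letter occurring
strictly between two occurrences of a letter `i` is `≥ i`. -/
def IsStirlingWord (k n : ℕ) (w : List ℕ) : Prop :=
  w.length = k * n ∧
  (∀ i, 1 ≤ i → i ≤ n → w.count i = k) ∧
  (∀ p q r, p < q → q < r → r < w.length →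
    w.getD p 0 = w.getD r 0 → w.getD p 0 ≤ w.getD q 0)

/-! The letters between two occurrences of the largest letter `n + 1` are `≥ n + 1`, hence equal
to it, so in a `k`-Stirling permutation of size `n + 1` the `k` copies of `n + 1` form one
contiguous block. Deleting that block gives a `k`-Stirling permutation of size `n`; conversely a
block of `k` copies of `n + 1` may be inserted into any of the `k * n + 1` gaps of such a word.
Hence `Q (n + 1) = (k * n + 1) * Q n`, with `Q 0 = 1` counting the empty word. -/

open List

namespace List

variable {α : Type*}

theorem triple_sublist_iff {x y z : α} {w : List α} :
    [x, y, z] <+ w ↔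
      ∃ p q r : ℕ, p < q ∧ q < r ∧ w[p]? = some x ∧ w[q]? = some y ∧ w[r]? = some z := by
  rw [sublist_iff_exists_orderEmbedding_getElem?_eq]
  constructor
  · rintro ⟨f, hf⟩
    exact ⟨f 0, f 1, f 2, f.lt_iff_lt.2 zero_lt_one, f.lt_iff_lt.2 one_lt_two,
      (hf 0).symm, (hf 1).symm, (hf 2).symm⟩
  · rintro ⟨p, q, r, hpq, hqr, hp, hq, hr⟩
    have hr' : r < w.length := (getElem?_eq_some_iff.1 hr).1
    let f : ℕ → ℕ
      | 0 => p
      | 1 => q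
      | 2 => r
      | i => w.length + i
    have hf : StrictMono f := strictMono_nat_of_lt_succ fun
      | 0 | 1 => by simpa [f]
      | 2 => by simp [f]; omega
      | i + 3 => by simp [f]
    refine ⟨OrderEmbedding.ofStrictMono f hf, fun
      | 0 | 1 | 2 => by simp [f, hp, hq, hr]
      | i + 3 => by simp [f]⟩

theorem eq_of_sublist_append_replicate_append {m y : α} {a b : List α} (ha : m ∉ a)
    (hb : m ∉ b) {k : ℕ} (h : [m, y, m] <+ a ++ replicate k m ++ b) : y = m := by
  obtain ⟨l₁, l₂, hl, hl₁, hl₂⟩ := sublist_append_iff.1 h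
  obtain rfl : l₂ = [] := by
    rcases l₂.eq_nil_or_concat with rfl | ⟨l₂, u, rfl⟩
    · rfl
    · obtain rfl : u = m := by simpa using (congrArg getLast? hl).symm
      exact absurd (hl₂.subset (by simp)) hb
  rw [append_nil] at hl
  subst hl
  obtain ⟨l₃, l₄, hl, hl₃, hl₄⟩ := sublist_append_iff.1 hl₁
  obtain rfl : l₃ = [] := by
    rcases l₃ with _ | ⟨u, l₃⟩
    · rfl
    · obtain rfl : u = m := by simpa using (congrArg head? hl).symm
      exact absurd (hl₃.subset (by simp)) ha
  rw [nil_append] at hl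
  subst hl
  exact eq_of_mem_replicate (hl₄.subset (by simp))

variable [DecidableEq α]

theorem sum_count_eq_countP (s : Finset α) (l : List α) :
    ∑ a ∈ s, l.count a = l.countP (· ∈ s) := by
  induction l with
  | nil => simp
  | cons b l ih => simp [count_cons, Finset.sum_add_distrib, ih, countP_cons]

theorem filter_ne_append_replicate_append {m : α} {a b : List α} (ha : m ∉ a) (hb : m ∉ b)
    (k : ℕ) : (a ++ replicate k m ++ b).filter (· ≠ m) = a ++ b := by
  simp only [filter_append, filter_replicate]
  rw [filter_eq_self.2 fun x hx => decide_eq_true (ne_of_mem_of_not_mem hx ha),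
    filter_eq_self.2 fun x hx => decide_eq_true (ne_of_mem_of_not_mem hx hb)]
  simp

theorem idxOf_append_replicate_append {m : α} {a : List α} (ha : m ∉ a) {k : ℕ} (hk : 0 < k)
    (b : List α) : (a ++ replicate k m ++ b).idxOf m = a.length := by
  obtain ⟨k, rfl⟩ := Nat.exists_eq_add_of_lt hk
  rw [append_assoc, idxOf_append_of_notMem ha]
  simp [replicate_succ]

theorem exists_eq_append_replicate_append {m : α} :
    ∀ {w : List α}, (∀ y, [m, y, m] <+ w → y = m) →
      ∃ a b, m ∉ a ∧ m ∉ b ∧ w = a ++ replicate (w.count m) m ++ b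
  | [], _ => ⟨[], [], by simp⟩
  | x :: w, h => by
    obtain ⟨a, b, ha, hb, hw⟩ :=
      exists_eq_append_replicate_append fun y hy => h y (hy.cons x)
    generalize w.count m = c at hw
    subst hw
    have hb' := count_eq_zero.2 hb
    by_cases hx : x = m
    · subst hx
      rcases a with _ | ⟨y, a⟩
      · exact ⟨[], b, ha, hb, by simp [hb', replicate_succ]⟩
      obtain ⟨hy, ha⟩ : y ≠ x ∧ x ∉ a := by simpa [eq_comm] using ha
      obtain rfl : c = 0 := by
        by_contra hc
        refine hy (h y (cons_sublist_cons.2 (cons_sublist_cons.2 (singleton_sublist.2 ?_))))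
        simp [hc]
      exact ⟨[], y :: a ++ b, not_mem_nil, by simp [hy.symm, ha, hb],
        by simp [hb', hy, count_eq_zero.2 ha]⟩
    · exact ⟨x :: a, b, by simp [Ne.symm hx, ha], hb,
        by simp [count_cons_of_ne hx, hb', count_eq_zero.2 ha]⟩

theorem take_append_replicate_append_drop_inj {m : α} {k : ℕ} (hk : 0 < k) {w₁ w₂ : List α}
    {p₁ p₂ : ℕ} (h₁ : m ∉ w₁) (h₂ : m ∉ w₂) (hp₁ : p₁ ≤ w₁.length) (hp₂ : p₂ ≤ w₂.length)
    (h : w₁.take p₁ ++ replicate k m ++ w₁.drop p₁ = w₂.take p₂ ++ replicate k m ++ w₂.drop p₂) :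
    w₁ = w₂ ∧ p₁ = p₂ := by
  have filter_eq {w : List α} (hm : m ∉ w) (p : ℕ) :
      (w.take p ++ replicate k m ++ w.drop p).filter (· ≠ m) = w := by
    rw [filter_ne_append_replicate_append (fun h => hm (mem_of_mem_take h))
      (fun h => hm (mem_of_mem_drop h)), take_append_drop]
  have idxOf_eq {w : List α} (hm : m ∉ w) {p : ℕ} (hp : p ≤ w.length) :
      (w.take p ++ replicate k m ++ w.drop p).idxOf m = p := by
    rw [idxOf_append_replicate_append (fun h => hm (mem_of_mem_take h)) hk, length_take_of_le hp]
  exact ⟨by rw [← filter_eq h₁ p₁, h, filter_eq h₂],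
    by rw [← idxOf_eq h₁ hp₁, h, idxOf_eq h₂ hp₂]⟩

end List

namespace IsStirlingWord

variable {k n : ℕ} {w : List ℕ}

theorem iff_sublist :
    IsStirlingWord k n w ↔ w.length = k * n ∧ (∀ i, 1 ≤ i → i ≤ n → w.count i = k) ∧
      ∀ x y, [x, y, x] <+ w → x ≤ y := by
  refine and_congr_right fun _ => and_congr_right fun _ => ⟨fun h x y hxy => ?_, fun h => ?_⟩
  · obtain ⟨p, q, r, hpq, hqr, hp, hq, hr⟩ := triple_sublist_iff.1 hxy
    have hr' : r < w.length := (List.getElem?_eq_some_iff.1 hr).1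
    simpa [getD_eq_getElem?_getD, hp, hq, hr] using h p q r hpq hqr hr'
  · intro p q r hpq hqr hr hpr
    rw [getD_eq_getElem _ _ (hpq.trans (hqr.trans hr)), getD_eq_getElem _ _ (hqr.trans hr),
      getD_eq_getElem _ _ hr] at *
    exact h _ _ (triple_sublist_iff.2 ⟨p, q, r, hpq, hqr, by simp, by simp, by simp [hpr]⟩)

theorem mem_Icc (h : IsStirlingWord k n w) {x : ℕ} (hx : x ∈ w) : x ∈ Finset.Icc 1 n := by
  obtain ⟨hlen, hcount, -⟩ := h
  have : w.countP (· ∈ Finset.Icc 1 n) = w.length := by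
    rw [← sum_count_eq_countP, Finset.sum_congr rfl fun i hi => hcount i
      (Finset.mem_Icc.1 hi).1 (Finset.mem_Icc.1 hi).2]
    simp [hlen, mul_comm]
  simpa using countP_eq_length.1 this x hx

theorem succ_notMem (h : IsStirlingWord k n w) : n + 1 ∉ w :=
  fun hm => by simpa using h.mem_Icc hm

theorem of_succ_append_replicate_append {a b : List ℕ}
    (h : IsStirlingWord k (n + 1) (a ++ replicate k (n + 1) ++ b)) :
    IsStirlingWord k n (a ++ b) := by
  rw [iff_sublist] at h ⊢
  obtain ⟨hlen, hcount, hpat⟩ := h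
  refine ⟨?_, fun i hi₁ hi₂ => ?_, fun x y hxy => hpat x y (hxy.trans (by simp))⟩
  · simp only [length_append, length_replicate, Nat.mul_succ] at hlen ⊢
    omega
  · have := hcount i hi₁ (by omega)
    simp only [count_append, count_replicate, beq_iff_eq] at this ⊢
    rw [if_neg (by omega)] at this
    omega

theorem succ_append_replicate_append {a b : List ℕ} (h : IsStirlingWord k n (a ++ b)) :
    IsStirlingWord k (n + 1) (a ++ replicate k (n + 1) ++ b) := by
  have ha : n + 1 ∉ a := fun hm => h.succ_notMem (mem_append_left b hm)
  have hb : n + 1 ∉ b := fun hm => h.succ_notMem (mem_append_right a hm)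
  have hle : ∀ x ∈ a ++ b, x ≤ n := fun x hx => (Finset.mem_Icc.1 (h.mem_Icc hx)).2
  rw [iff_sublist] at h ⊢
  obtain ⟨hlen, hcount, hpat⟩ := h
  refine ⟨?_, fun i hi₁ hi₂ => ?_, fun x y hxy => ?_⟩
  · simp only [length_append, length_replicate, Nat.mul_succ] at hlen ⊢
    omega
  · simp only [count_append, count_replicate, beq_iff_eq]
    rcases hi₂.lt_or_eq with hi₂ | rfl
    · have := hcount i hi₁ (by omega)
      simp only [count_append] at this
      rw [if_neg (by omega)]
      omega
    · simp [count_eq_zero.2 ha, count_eq_zero.2 hb]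
  by_cases hx : x = n + 1
  · subst hx
    exact (eq_of_sublist_append_replicate_append ha hb hxy).ge
  by_cases hy : y = n + 1
  · have : x ∈ a ++ b := by simpa [hx] using hxy.subset (mem_cons_self (a := x))
    exact hy ▸ (hle x this).trans n.le_succ
  · have := hxy.filter (· ≠ n + 1)
    rw [filter_ne_append_replicate_append ha hb] at this
    exact hpat x y (by simpa [hx, hy] using this)

theorem exists_eq_append_replicate_append (h : IsStirlingWord k (n + 1) w) :
    ∃ a b, w = a ++ replicate k (n + 1) ++ b := by
  obtain ⟨a, b, -, -, hw⟩ := List.exists_eq_append_replicate_append (m := n + 1) fun y hy =>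
    le_antisymm (Finset.mem_Icc.1 (h.mem_Icc (hy.subset (by simp)))).2
      ((iff_sublist.1 h).2.2 _ _ hy)
  exact ⟨a, b, h.2.1 (n + 1) (Nat.le_add_left 1 n) le_rfl ▸ hw⟩

theorem card_zero : Nat.card {w // IsStirlingWord k 0 w} = 1 :=
  Nat.card_eq_one_iff_exists.2 ⟨⟨[], by simp, fun i h₁ h₂ => by omega, by simp⟩,
    fun ⟨w, h⟩ => Subtype.ext (length_eq_zero_iff.1 (by simpa using h.1))⟩

theorem card_succ (hk : 0 < k) :
    Nat.card {w // IsStirlingWord k (n + 1) w} =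
      Nat.card {w // IsStirlingWord k n w} * (k * n + 1) := by
  let f (x : {w // IsStirlingWord k n w} × Fin (k * n + 1)) :
      {w // IsStirlingWord k (n + 1) w} :=
    ⟨x.1.1.take x.2 ++ replicate k (n + 1) ++ x.1.1.drop x.2,
      succ_append_replicate_append (by rw [take_append_drop]; exact x.1.2)⟩
  have hf : f.Bijective := by
    refine ⟨fun ⟨⟨w₁, h₁⟩, p₁⟩ ⟨⟨w₂, h₂⟩, p₂⟩ h => ?_, fun ⟨w, h⟩ => ?_⟩
    · obtain ⟨rfl, hp⟩ := take_append_replicate_append_drop_inj hk h₁.succ_notMem h₂.succ_notMem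
        (p₁.is_le.trans_eq h₁.1.symm) (p₂.is_le.trans_eq h₂.1.symm) (Subtype.mk.inj h)
      exact Prod.ext rfl (Fin.ext hp)
    · obtain ⟨a, b, rfl⟩ := h.exists_eq_append_replicate_append
      have hab := of_succ_append_replicate_append h
      have hlen : a.length < k * n + 1 := by
        have := hab.1
        simp only [length_append] at this
        omega
      exact ⟨⟨⟨a ++ b, hab⟩, ⟨a.length, hlen⟩⟩, Subtype.ext (by simp [f])⟩
  rw [← Nat.card_eq_of_bijective f hf, Nat.card_prod, Nat.card_fin]

end IsStirlingWord

theorem stirling_count_general (k n : ℕ) (hk : 1 ≤ k) :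
    Nat.card {w : List ℕ // IsStirlingWord k n w} =
      ∏ i ∈ Finset.Icc 1 (n - 1), (k * i + 1) := by
  induction n with
  | zero => simpa using IsStirlingWord.card_zero
  | succ n ih =>
    rw [IsStirlingWord.card_succ hk, ih]
    rcases n with _ | n
    · simp
    · rw [Nat.add_sub_cancel, Nat.add_sub_cancel,
        Finset.prod_Icc_succ_top (Nat.le_add_left 1 n)]

theorem stirling_count (k n : ℕ) (hk : 1 ≤ k) (hn : 1 ≤ n) :
    Nat.card {w : List ℕ // IsStirlingWord k n w} =
      ∏ i ∈ Finset.Icc 1 (n - 1), (k * i + 1) :=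
  stirling_count_general k n hk
end

section
/- The number of path diagrams of length n with step vectors a_ℓ=(1,ℓ) (1≤ℓ≤k), b=(1,-1), c=(1,0) and possibility function pos(a_{j,ℓ}) = C(k+1,ℓ+1)(j+1), pos(b_j) = j+1, pos(c_j) = (k+1)(j+1) equals ∏_{ℓ=1}^{n+1}(k(ℓ-1)+1), the number of (k+1)-ary increasing trees of size n+1. -/
/-- Height of the path after `j` steps, where each step carries (increment, choice). -/
def pathHeight (u : List (ℤ × ℕ)) (j : ℕ) : ℤ :=
  ((u.take j).map Prod.fst).sum

/-- The possibility function: for a step of increment `d` (rise `a_ℓ` with `d = ℓ ≥ 1`,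
fall `b` with `d = -1`, level `c` with `d = 0`) starting at height `y`:
`pos(a_{j,ℓ}) = C(k+1,ℓ+1)(j+1)`, `pos(b_j) = j+1`, `pos(c_j) = (k+1)(j+1)`. -/
def posFun (k : ℕ) (d : ℤ) (y : ℤ) : ℕ :=
  if d = -1 then y.toNat + 1
  else if d = 0 then (k + 1) * (y.toNat + 1)
  else Nat.choose (k + 1) (d.toNat + 1) * (y.toNat + 1)

/-- A path diagram of length `n`: a nonnegative lattice path from height `0` to height `0`
with steps `a_1,…,a_k,b,c`, each step `j` equipped with a choice `s_j < pos(v_j)` where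
`v_j` is the step labeled by its starting height. -/
def IsPathDiagram (k n : ℕ) (u : List (ℤ × ℕ)) : Prop :=
  u.length = n ∧
  (∀ p ∈ u, p.1 = -1 ∨ p.1 = 0 ∨ (1 ≤ p.1 ∧ p.1 ≤ (k : ℤ))) ∧
  (∀ j ≤ n, 0 ≤ pathHeight u j) ∧
  pathHeight u n = 0 ∧
  ∀ j < n, (u.getD j (0, 0)).2 < posFun k (u.getD j (0, 0)).1 (pathHeight u j)

/-!
Let `D(n, y)` count the diagrams of length `n` ending at height `y`; we show
`D(n, y) = (∏_{i<n} (k i + 1)) · C(k n + 1, y + 1)`, which at `y = 0` is the claimed product.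
Cutting off the last step, of increment `m - 1` from height `h` with `m + h = y + 1` and
`C(k+1, m) (h+1)` labels, gives `D(n+1, y) = ∑_{m+h=y+1} D(n, h) C(k+1, m) (h+1)`. Since
`C(N+1, h+1) (h+1) = (N+1) C(N, h)`, Vandermonde's identity turns the right-hand side into
`(k n + 1) · ∏_{i<n} (k i + 1) · C(k + k n + 1, y + 1)`.
-/

open Finset

def IsPathDiagramTo (k n y : ℕ) (u : List (ℤ × ℕ)) : Prop :=
  u.length = n ∧
  (∀ p ∈ u, p.1 = -1 ∨ p.1 = 0 ∨ (1 ≤ p.1 ∧ p.1 ≤ (k : ℤ))) ∧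
  (∀ j ≤ n, 0 ≤ pathHeight u j) ∧
  pathHeight u n = (y : ℤ) ∧
  ∀ j < n, (u.getD j (0, 0)).2 < posFun k (u.getD j (0, 0)).1 (pathHeight u j)

lemma isPathDiagram_iff_isPathDiagramTo_zero {k n : ℕ} {u : List (ℤ × ℕ)} :
    IsPathDiagram k n u ↔ IsPathDiagramTo k n 0 u := by
  simp only [IsPathDiagram, IsPathDiagramTo, Nat.cast_zero]

lemma pathHeight_append_of_le_length (w v : List (ℤ × ℕ)) {j : ℕ} (h : j ≤ w.length) :
    pathHeight (w ++ v) j = pathHeight w j := by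
  rw [pathHeight, List.take_append_of_le_length h, pathHeight]

lemma pathHeight_append_singleton (w : List (ℤ × ℕ)) (p : ℤ × ℕ) :
    pathHeight (w ++ [p]) (w.length + 1) = pathHeight w w.length + p.1 := by
  simp [pathHeight]

/-- Writing the increment as `m - 1` merges the three cases of `posFun` into one formula, which
vanishes exactly for the forbidden increments `m > k + 1`. -/
lemma posFun_natCast_sub_one (k m h : ℕ) :
    posFun k ((m : ℤ) - 1) h = (k + 1).choose m * (h + 1) := by
  rcases m with _ | _ | m
  · simp [posFun]
  · simp [posFun]
  · have hm : ((m + 2 : ℕ) : ℤ) - 1 = ((m + 1 : ℕ) : ℤ) := by push_cast; ring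
    rw [posFun, hm, if_neg (by omega), if_neg (by omega), Int.toNat_natCast, Int.toNat_natCast]

lemma IsPathDiagramTo.append_singleton {k n y m h s : ℕ} {w : List (ℤ × ℕ)}
    (hw : IsPathDiagramTo k n h w) (hy : m + h = y + 1) (hs : s < (k + 1).choose m * (h + 1)) :
    IsPathDiagramTo k (n + 1) y (w ++ [((m : ℤ) - 1, s)]) := by
  obtain ⟨hlen, hsteps, hnonneg, hend, hchoice⟩ := hw
  have hm : m ≤ k + 1 := by
    by_contra! hlt
    rw [Nat.choose_eq_zero_of_lt hlt, zero_mul] at hs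
    exact Nat.not_lt_zero s hs
  have hfinal : pathHeight (w ++ [((m : ℤ) - 1, s)]) (n + 1) = y := by
    rw [← hlen, pathHeight_append_singleton, hlen, hend]
    omega
  refine ⟨by simp [hlen], ?_, ?_, hfinal, ?_⟩
  · intro p hp
    rcases List.mem_append.1 hp with hp | hp
    · exact hsteps p hp
    · rw [List.mem_singleton.1 hp]
      omega
  · intro j hj
    rcases Nat.lt_or_eq_of_le hj with hj | rfl
    · rw [pathHeight_append_of_le_length w _ (by omega)]
      exact hnonneg j (by omega)
    · rw [hfinal]
      exact Int.natCast_nonneg y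
  · intro j hj
    rw [pathHeight_append_of_le_length w _ (by omega)]
    rcases Nat.lt_or_eq_of_le (Nat.le_of_lt_succ hj) with hj | rfl
    · rw [List.getD_append _ _ _ _ (by omega)]
      exact hchoice j hj
    · rw [List.getD_append_right _ _ _ _ (by omega), hlen, Nat.sub_self, hend,
        List.getD_cons_zero, posFun_natCast_sub_one]
      exact hs

lemma IsPathDiagramTo.exists_eq_append_singleton {k n y : ℕ} {u : List (ℤ × ℕ)}
    (hu : IsPathDiagramTo k (n + 1) y u) :
    ∃ m h w s, m + h = y + 1 ∧ IsPathDiagramTo k n h w ∧ s < (k + 1).choose m * (h + 1) ∧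
      u = w ++ [((m : ℤ) - 1, s)] := by
  obtain ⟨hlen, hsteps, hnonneg, hend, hchoice⟩ := hu
  obtain ⟨w, ⟨d, s⟩, rfl⟩ : ∃ w p, u = w ++ [p] :=
    ⟨u.dropLast, u.getLast (List.ne_nil_of_length_eq_add_one hlen),
      (List.dropLast_append_getLast _).symm⟩
  have hwlen : w.length = n := by simpa using hlen
  have hheight (j : ℕ) (hj : j ≤ n) : pathHeight (w ++ [(d, s)]) j = pathHeight w j :=
    pathHeight_append_of_le_length w _ (by omega)
  have hd : -1 ≤ d ∧ d ≤ k := by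
    rcases hsteps (d, s) (by simp) with h | h | h <;> omega
  have hstart : 0 ≤ pathHeight w n := hheight n le_rfl ▸ hnonneg n (by omega)
  rw [← hwlen, pathHeight_append_singleton, hwlen] at hend
  refine ⟨(d + 1).toNat, (pathHeight w n).toNat, w, s, by omega,
    ⟨hwlen, fun p hp => hsteps p (by simp [hp]), fun j hj => ?_, by omega, fun j hj => ?_⟩,
    ?_, ?_⟩
  · exact hheight j hj ▸ hnonneg j (by omega)
  · have := hchoice j (by omega)
    rwa [List.getD_append _ _ _ _ (by omega), hheight j hj.le] at this
  · have hlast := hchoice n (by omega)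
    rw [List.getD_append_right _ _ _ _ (by omega), hwlen, Nat.sub_self, List.getD_cons_zero,
      hheight n le_rfl] at hlast
    rwa [← posFun_natCast_sub_one, Int.toNat_of_nonneg (by omega),
      Int.toNat_of_nonneg hstart, add_sub_cancel_right]
  · rw [Int.toNat_of_nonneg (by omega), add_sub_cancel_right]

lemma isPathDiagramTo_zero_iff {k y : ℕ} {u : List (ℤ × ℕ)} :
    IsPathDiagramTo k 0 y u ↔ y = 0 ∧ u = [] := by
  constructor
  · rintro ⟨hlen, -, -, hend, -⟩
    rw [List.length_eq_zero_iff] at hlen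
    subst hlen
    simp only [pathHeight, List.take_nil, List.map_nil, List.sum_nil] at hend
    exact ⟨by omega, rfl⟩
  · rintro ⟨rfl, rfl⟩
    exact ⟨rfl, by simp, fun j _ => by simp [pathHeight], by simp [pathHeight], by simp⟩

lemma isPathDiagramTo_succ_iff {k n y : ℕ} {u : List (ℤ × ℕ)} :
    IsPathDiagramTo k (n + 1) y u ↔
      ∃ m h w s, m + h = y + 1 ∧ IsPathDiagramTo k n h w ∧ s < (k + 1).choose m * (h + 1) ∧
        u = w ++ [((m : ℤ) - 1, s)] := by
  refine ⟨IsPathDiagramTo.exists_eq_append_singleton, ?_⟩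
  rintro ⟨m, h, w, s, hy, hw, hs, rfl⟩
  exact hw.append_singleton hy hs

/-- `mh = (m, h)`: the last step has increment `m - 1` and starts at height `h`. -/
def pathDiagramsTo (k : ℕ) : ℕ → ℕ → Finset (List (ℤ × ℕ))
  | 0, y => if y = 0 then {[]} else ∅
  | n + 1, y => (antidiagonal (y + 1)).biUnion fun mh =>
      (pathDiagramsTo k n mh.2 ×ˢ range ((k + 1).choose mh.1 * (mh.2 + 1))).image
        fun ws => ws.1 ++ [((mh.1 : ℤ) - 1, ws.2)]

lemma mem_pathDiagramsTo {k n y : ℕ} {u : List (ℤ × ℕ)} :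
    u ∈ pathDiagramsTo k n y ↔ IsPathDiagramTo k n y u := by
  induction n generalizing y u with
  | zero =>
    rw [isPathDiagramTo_zero_iff, pathDiagramsTo]
    split_ifs with hy <;> simp [hy]
  | succ n ih =>
    simp only [pathDiagramsTo, isPathDiagramTo_succ_iff, mem_biUnion,
      HasAntidiagonal.mem_antidiagonal, mem_image, mem_product, mem_range, ih, Prod.exists]
    constructor
    · rintro ⟨m, h, hy, w, s, ⟨hw, hs⟩, rfl⟩
      exact ⟨m, h, w, s, hy, hw, hs, rfl⟩
    · rintro ⟨m, h, w, s, hy, hw, hs, rfl⟩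
      exact ⟨m, h, hy, w, s, ⟨hw, hs⟩, rfl⟩

lemma card_pathDiagramsTo_succ (k n y : ℕ) :
    #(pathDiagramsTo k (n + 1) y) = ∑ mh ∈ antidiagonal (y + 1),
      #(pathDiagramsTo k n mh.2) * ((k + 1).choose mh.1 * (mh.2 + 1)) := by
  rw [pathDiagramsTo, card_biUnion]
  · refine sum_congr rfl fun mh _ => ?_
    rw [card_image_of_injective, card_product, card_range]
    rintro ⟨w₁, s₁⟩ ⟨w₂, s₂⟩ h
    simp_all [List.append_singleton_inj]
  · intro mh₁ h₁ mh₂ h₂ hne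
    simp only [Function.onFun, disjoint_left, mem_image]
    rintro _ ⟨ws₁, -, rfl⟩ ⟨ws₂, -, h⟩
    simp only [List.append_singleton_inj, Prod.mk.injEq] at h
    rw [mem_coe, HasAntidiagonal.mem_antidiagonal] at h₁ h₂
    exact hne (Prod.ext (by omega) (by omega))

lemma sum_antidiagonal_choose_mul_choose_succ_mul (a N j : ℕ) :
    ∑ mh ∈ antidiagonal j, (N + 1).choose (mh.2 + 1) * (a.choose mh.1 * (mh.2 + 1)) =
      (N + 1) * (a + N).choose j := by
  rw [Nat.add_choose_eq, mul_sum]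
  refine sum_congr rfl fun mh _ => ?_
  rw [mul_left_comm (N + 1), Nat.add_one_mul_choose_eq]
  ring

lemma card_pathDiagramsTo (k n y : ℕ) :
    #(pathDiagramsTo k n y) = (∏ i ∈ range n, (k * i + 1)) * (k * n + 1).choose (y + 1) := by
  induction n generalizing y with
  | zero =>
    rcases y with _ | y
    · simp [pathDiagramsTo]
    · simp [pathDiagramsTo, Nat.choose_eq_zero_of_lt]
  | succ n ih =>
    simp_rw [card_pathDiagramsTo_succ, ih, mul_assoc, ← mul_sum,
      sum_antidiagonal_choose_mul_choose_succ_mul, prod_range_succ, mul_assoc,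
      show k + 1 + k * n = k * (n + 1) + 1 by ring]

theorem path_diagram_count_general (k n : ℕ) :
    Nat.card {u : List (ℤ × ℕ) // IsPathDiagram k n u} =
      ∏ ℓ ∈ Finset.Icc 1 (n + 1), (k * (ℓ - 1) + 1) := by
  have hset : {u | IsPathDiagram k n u} = ↑(pathDiagramsTo k n 0) := by
    ext u
    simp [isPathDiagram_iff_isPathDiagramTo_zero, mem_pathDiagramsTo]
  rw [← Set.coe_ofPred, hset, Nat.card_coe_set_eq, Set.ncard_coe_finset, card_pathDiagramsTo,
    Nat.choose_one_right, ← prod_range_succ, ← Finset.Ico_add_one_right_eq_Icc,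
    prod_Ico_eq_prod_range]
  simp [add_comm]

/-- The number of path diagrams of length `n` equals `∏_{ℓ=1}^{n+1}(k(ℓ-1)+1)`, the
number of `(k+1)`-ary increasing trees of size `n+1`. -/
theorem path_diagram_count (k n : ℕ) (hk : 1 ≤ k) :
    Nat.card {u : List (ℤ × ℕ) // IsPathDiagram k n u} =
      ∏ ℓ ∈ Finset.Icc 1 (n + 1), (k * (ℓ - 1) + 1) :=
  path_diagram_count_general k n
end

section
/- The number of path diagrams of length n with infinitely many rise step types a_ℓ = (1,ℓ) for all ℓ ≥ 1, fall step b = (1,-1), level step c = (1,0), and possibility function pos(a_{j,ℓ}) = pos(b_j) = pos(c_j) = j+1, equals (2n-1)!!, the number of plane-oriented recursive trees of size n+1. -/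
/-- A path diagram of length `n` with infinitely many rise step types `a_ℓ = (1,ℓ)`,
`ℓ ≥ 1`, a fall step `b = (1,-1)` and a level step `c = (1,0)`: a nonnegative lattice
path from height `0` to height `0`, each step `j` equipped with a choice
`s_j < y_{j-1} + 1` where `y_{j-1}` is its starting height (the possibility function is
`pos(a_{j,ℓ}) = pos(b_j) = pos(c_j) = j+1`). -/
def IsPortPathDiagram (n : ℕ) (u : List (ℤ × ℕ)) : Prop :=
  u.length = n ∧
  (∀ p ∈ u, -1 ≤ p.1) ∧
  (∀ j ≤ n, 0 ≤ pathHeight u j) ∧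
  pathHeight u n = 0 ∧
  ∀ j < n, ((u.getD j (0, 0)).2 : ℤ) < pathHeight u j + 1

/-!
Let `c n h` count the valid tails of length `n` starting at height `h`. Splitting off the first
step, which goes to some height `k ≥ h - 1` and carries one of `h + 1` choices, gives
`c (n+1) h = (h+1) * ∑_{k ≥ h-1} c n k`. The suffix sums `∑_{k ≥ h} c n k` then have the closed
form `(2m-1)‼ * (2m+1)(2m+2)⋯(2m+h+1)` with `m = n - h`, because this expression telescopes
along the recursion. At `h = 0` the recursion gives `c (n+1) 0 = ∑_k c n k = (2n+1)‼`.
-/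

open Finset Nat

/-- No separate nonnegativity clause is needed: `s ≤ h` with `s : ℕ` forces `0 ≤ h`. -/
def IsTail : ℤ → List (ℤ × ℕ) → Prop
  | h, [] => h = 0
  | h, p :: v => -1 ≤ p.1 ∧ (p.2 : ℤ) ≤ h ∧ IsTail (h + p.1) v

@[simp]
lemma pathHeight_zero (u : List (ℤ × ℕ)) : pathHeight u 0 = 0 := rfl

@[simp]
lemma pathHeight_nil (j : ℕ) : pathHeight [] j = 0 := by
  simp [pathHeight]

@[simp]
lemma pathHeight_cons_succ (p : ℤ × ℕ) (v : List (ℤ × ℕ)) (j : ℕ) :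
    pathHeight (p :: v) (j + 1) = p.1 + pathHeight v j := by
  simp [pathHeight]

theorem isTail_iff (h : ℤ) (u : List (ℤ × ℕ)) :
    IsTail h u ↔ (∀ p ∈ u, -1 ≤ p.1) ∧ (∀ j ≤ u.length, 0 ≤ h + pathHeight u j) ∧
      h + pathHeight u u.length = 0 ∧
      ∀ j < u.length, ((u.getD j (0, 0)).2 : ℤ) < h + pathHeight u j + 1 := by
  induction u generalizing h with
  | nil => simp +contextual [IsTail]
  | cons p v ih =>
    simp only [IsTail, ih, List.mem_cons, forall_eq_or_imp, List.length_cons,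
      ← Nat.lt_add_one_iff, Nat.forall_lt_succ_left, pathHeight_zero, pathHeight_cons_succ,
      List.getD_cons_zero, List.getD_cons_succ, add_zero, ← add_assoc, Int.lt_add_one_iff]
    constructor
    · rintro ⟨hp, hs, hv, hnn, hend, hch⟩
      exact ⟨⟨hp, hv⟩, ⟨(Int.natCast_nonneg _).trans hs, hnn⟩, hend, hs, hch⟩
    · rintro ⟨⟨hp, hv⟩, ⟨-, hnn⟩, hend, hs, hch⟩
      exact ⟨hp, hs, hv, hnn, hend, hch⟩

theorem isPortPathDiagram_iff (n : ℕ) (u : List (ℤ × ℕ)) :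
    IsPortPathDiagram n u ↔ u.length = n ∧ IsTail 0 u := by
  simp only [IsPortPathDiagram, isTail_iff, zero_add]
  constructor <;> rintro ⟨rfl, hu⟩ <;> exact ⟨rfl, hu⟩

lemma IsTail.nonneg {h : ℤ} {u : List (ℤ × ℕ)} (hu : IsTail h u) : 0 ≤ h := by
  cases u with
  | nil => exact hu.ge
  | cons p v => exact (Int.natCast_nonneg _).trans hu.2.1

lemma IsTail.le_length {h : ℤ} {u : List (ℤ × ℕ)} (hu : IsTail h u) : h ≤ u.length := by
  induction u generalizing h with
  | nil => exact hu.le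
  | cons p v ih =>
    have hv := ih hu.2.2
    have hp := hu.1
    simp only [List.length_cons, Nat.cast_add, Nat.cast_one]
    omega

def tails : ℕ → ℕ → Finset (List (ℤ × ℕ))
  | 0, h => if h = 0 then {[]} else ∅
  -- at `h = 0` the truncated `h - 1` is the intended lower bound `0`
  | n + 1, h => ((Icc (h - 1) n).sigma fun k => range (h + 1) ×ˢ tails n k).image
      fun x => ((x.1 : ℤ) - h, x.2.1) :: x.2.2

theorem mem_tails (n h : ℕ) (u : List (ℤ × ℕ)) :
    u ∈ tails n h ↔ u.length = n ∧ IsTail h u := by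
  induction n generalizing h u with
  | zero =>
    rcases u with _ | ⟨p, v⟩ <;> by_cases hh : h = 0 <;> simp [tails, IsTail, hh]
  | succ n ih =>
    simp only [tails, mem_image, Sigma.exists, mem_sigma, mem_Icc, mem_product, mem_range,
      Prod.exists, ih]
    constructor
    · rintro ⟨k, s, v, ⟨⟨hk, -⟩, hs, hv, ht⟩, rfl⟩
      refine ⟨by simp [hv], by omega, Nat.cast_le.mpr (by omega), by simpa using ht⟩
    · rintro ⟨hlen, ht⟩
      obtain _ | ⟨⟨d, s⟩, v⟩ := u
      · simp at hlen
      obtain ⟨hd, hs, hv⟩ := ht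
      have hlen : v.length = n := by simpa using hlen
      have hk := hv.nonneg
      have hkn := hv.le_length
      refine ⟨(h + d).toNat, s, v, ⟨⟨by omega, by omega⟩, by omega, hlen, ?_⟩, ?_⟩
      · rwa [Int.toNat_of_nonneg hk]
      · simp only [Int.toNat_of_nonneg hk, add_sub_cancel_left]

theorem card_tails_succ (n h : ℕ) :
    #(tails (n + 1) h) = (h + 1) * ∑ k ∈ Icc (h - 1) n, #(tails n k) := by
  rw [tails, Finset.card_image_of_injective]
  · simp only [card_sigma, card_product, card_range, mul_sum]
  · rintro ⟨k, s, v⟩ ⟨k', s', v'⟩ he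
    simp only [List.cons.injEq, Prod.mk.injEq, sub_left_inj, Nat.cast_inj] at he
    obtain ⟨⟨rfl, rfl⟩, rfl⟩ := he
    rfl

def tailSumClosed (m h : ℕ) : ℕ :=
  (2 * m - 1)‼ * (2 * m + 1).ascFactorial (h + 1)

lemma tailSumClosed_zero_succ (h : ℕ) :
    tailSumClosed 0 (h + 1) = (h + 2) * tailSumClosed 0 h := by
  simp only [tailSumClosed, ascFactorial_succ]
  ring

lemma tailSumClosed_succ_zero (m : ℕ) :
    tailSumClosed (m + 1) 0 = tailSumClosed m 0 + tailSumClosed m 1 := by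
  simp only [tailSumClosed, show 2 * (m + 1) - 1 = 2 * m + 1 by omega, doubleFactorial_add_one,
    ascFactorial_succ, ascFactorial_zero]
  ring

lemma tailSumClosed_succ_succ (m h : ℕ) :
    tailSumClosed (m + 1) (h + 1) =
      (h + 2) * tailSumClosed (m + 1) h + tailSumClosed m (h + 2) := by
  have hsplit : (2 * m + 1).ascFactorial (h + 2 + 1) =
      (2 * m + 1) * (2 * m + 2) * (2 * (m + 1) + 1).ascFactorial (h + 1) := by
    rw [show h + 2 + 1 = 2 + (h + 1) by ring, ← ascFactorial_mul_ascFactorial]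
    simp only [ascFactorial_succ, ascFactorial_zero]
    ring_nf
  simp only [tailSumClosed, hsplit, show 2 * (m + 1) - 1 = 2 * m + 1 by omega,
    doubleFactorial_add_one, ascFactorial_succ (k := h + 1)]
  ring

theorem sum_card_tails (n : ℕ) :
    ∀ h ≤ n, ∑ k ∈ Icc h n, #(tails n k) = tailSumClosed (n - h) h := by
  induction n with
  | zero =>
    intro h hh
    obtain rfl : h = 0 := by omega
    simp [tails, tailSumClosed]
  | succ n ih =>
    have hcard (k : ℕ) (hk : k ≤ n + 1) :
        #(tails (n + 1) k) = (k + 1) * tailSumClosed (n - (k - 1)) (k - 1) := by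
      rw [card_tails_succ, ih _ (by omega)]
    suffices ∀ m h, h + m = n + 1 →
        ∑ k ∈ Icc h (n + 1), #(tails (n + 1) k) = tailSumClosed m h from
      fun h hh => this _ h (by omega)
    intro m
    induction m with
    | zero =>
      intro h hh
      obtain rfl : h = n + 1 := by omega
      rw [Icc_self, sum_singleton, hcard _ le_rfl, tailSumClosed_zero_succ]
      simp
    | succ m ihm =>
      intro h hh
      rw [← add_sum_Ioc_eq_sum_Icc (by omega), ← Icc_add_one_left_eq_Ioc, ihm (h + 1) (by omega),
        hcard h (by omega)]
      cases h with
      | zero =>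
        obtain rfl : n = m := by omega
        simp [tailSumClosed_succ_zero]
      | succ j =>
        obtain rfl : n = j + m + 1 := by omega
        rw [tailSumClosed_succ_succ, add_tsub_cancel_right, show j + m + 1 - j = m + 1 by omega]

theorem card_tails_zero (n : ℕ) : #(tails n 0) = (2 * n - 1)‼ := by
  cases n with
  | zero => simp [tails]
  | succ n =>
    rw [card_tails_succ, Nat.zero_sub, sum_card_tails n 0 n.zero_le]
    simp only [tailSumClosed, tsub_zero, show 2 * (n + 1) - 1 = 2 * n + 1 by omega,
      doubleFactorial_add_one, ascFactorial_succ, ascFactorial_zero]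
    ring

theorem prod_Icc_two_mul_sub_one (n : ℕ) : ∏ ℓ ∈ Icc 1 n, (2 * ℓ - 1) = (2 * n - 1)‼ := by
  induction n with
  | zero => simp
  | succ n ih =>
    rw [prod_Icc_succ_top (by omega), ih, show 2 * (n + 1) - 1 = 2 * n + 1 by omega,
      doubleFactorial_add_one]
    ring

/-- The number of such path diagrams of length `n` is `(2n-1)!! = ∏_{ℓ=1}^{n}(2ℓ-1)`,
the number of plane-oriented recursive trees of size `n+1`. -/
theorem port_path_diagram_count (n : ℕ) :
    Nat.card {u : List (ℤ × ℕ) // IsPortPathDiagram n u} =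
      ∏ ℓ ∈ Finset.Icc 1 n, (2 * ℓ - 1) := by
  calc Nat.card {u : List (ℤ × ℕ) // IsPortPathDiagram n u}
      = Nat.card {u : List (ℤ × ℕ) // u ∈ tails n 0} :=
        Nat.card_congr <| Equiv.subtypeEquivRight fun u => by
          rw [mem_tails, isPortPathDiagram_iff, Nat.cast_zero]
    _ = #(tails n 0) := Nat.card_eq_finsetCard _
    _ = (2 * n - 1)‼ := card_tails_zero n
    _ = ∏ ℓ ∈ Icc 1 n, (2 * ℓ - 1) := (prod_Icc_two_mul_sub_one n).symm
end
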